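/- For every natural number k ≥ 0, arctan(L_{2k+1}/2) + 2·arctan(1/φ^{2k+1}) = π/2. -/
import Mathlib


open Real

/-- The Lucas numbers: `L 0 = 2`, `L 1 = 1`, `L (n+2) = L (n+1) + L n`. -/
def L : ℕ → ℝ
  | 0 => 2
  | 1 => 1
  | (n + 2) => L (n + 1) + L n

/-- The golden ratio `φ = (1 + √5)/2`. -/
noncomputable def phi : ℝ := (1 + Real.sqrt 5) / 2

noncomputable def psi : ℝ := (1 - Real.sqrt 5) / 2

lemma sqrt5_sq : Real.sqrt 5 ^ 2 = 5 := Real.sq_sqrt (by norm_num)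

lemma phi_sq : phi ^ 2 = phi + 1 := by
  have := sqrt5_sq
  unfold phi; field_simp; nlinarith [this]

lemma psi_sq : psi ^ 2 = psi + 1 := by
  have := sqrt5_sq
  unfold psi; field_simp; nlinarith [this]

lemma one_lt_phi : 1 < phi := by
  have h : 2 < Real.sqrt 5 := by
    have : (2:ℝ) = Real.sqrt 4 := by
      rw [show (4:ℝ) = 2^2 by norm_num, Real.sqrt_sq] <;> norm_num
    rw [this]
    exact Real.sqrt_lt_sqrt (by norm_num) (by norm_num)
  unfold phi; linarith

lemma phi_mul_psi : phi * psi = -1 := by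
  have := sqrt5_sq
  unfold phi psi; nlinarith [this]

lemma L_closed : ∀ n, L n = phi ^ n + psi ^ n := by
  intro n
  induction n using Nat.strong_induction_on with
  | _ n ih =>
    match n with
    | 0 => norm_num [L]
    | 1 => simp [L, phi, psi]
    | (m + 2) =>
      rw [L, ih (m+1) (by omega), ih m (by omega)]
      have h1 : phi ^ (m + 2) = phi ^ m * phi ^ 2 := by ring
      have h2 : psi ^ (m + 2) = psi ^ m * psi ^ 2 := by ring
      rw [h1, h2, phi_sq, psi_sq]; ring

theorem arctan_lucas_add_two_arctan_inv_phi (k : ℕ) :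
    arctan (L (2 * k + 1) / 2) + 2 * arctan (1 / phi ^ (2 * k + 1)) = π / 2 := by
  have hφ := one_lt_phi
  have hφ0 : (0:ℝ) < phi := by linarith
  set p : ℝ := phi ^ (2 * k + 1) with hp
  have hp1 : 1 < p := one_lt_pow₀ hφ (by omega)
  have hp0 : 0 < p := by linarith
  have hpsi : psi = -(1 / phi) := by
    field_simp
    nlinarith [phi_mul_psi]
  have hL : L (2 * k + 1) = p - 1 / p := by
    rw [L_closed, hpsi, Odd.neg_pow ⟨k, by ring⟩]
    rw [hp, div_pow, one_pow]
    ring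
  set x : ℝ := 1 / p with hx
  have hx0 : 0 < x := by positivity
  have hx1 : x < 1 := by
    rw [hx]; exact (div_lt_one hp0).mpr hp1
  have hxx : x * x < 1 := by nlinarith
  have hadd : arctan x + arctan x = arctan ((x + x) / (1 - x * x)) :=
    Real.arctan_add hxx
  set y : ℝ := (x + x) / (1 - x * x) with hy
  have hy0 : 0 < y := by
    apply div_pos (by linarith) (by linarith)
  have hLy : L (2 * k + 1) / 2 = y⁻¹ := by
    rw [hL, hy, hx]
    rw [inv_div]
    field_simp
    ring
  rw [hLy, Real.arctan_inv_of_pos hy0, two_mul, hadd]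
  ring
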